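/- arXiv:2505.01354 — 2 statements merged into one kernel-verified Lean document; each statement's English description precedes it below -/
import Mathlib

section
/- Let p ≥ 2 and δ > 0. Define f_δ : ℝ^{2n+1} → ℝ by f_δ(z) = (1/p) Σ_{i=1}^n (δ + z_i² + z_{i+n}² + z_{2n+1}²)^{p/2}. Then there exists a constant L = L(n,p) > 1 such that for all z, ξ ∈ ℝ^{2n+1}: Σ_{i=1}^n λ_{i,δ}(z)(ξ_i² + ξ_{i+n}² + ξ_{2n+1}²) ≤ ⟨D²f_δ(z)ξ, ξ⟩ ≤ L Σ_{i=1}^n λ_{i,δ}(z)(ξ_i² + ξ_{i+n}² + ξ_{2n+1}²), where λ_{i,δ}(z) = (δ + z_i² + z_{i+n}² + z_{2n+1}²)^{(p−2)/2}. -/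
open Real

/-- Partial derivative in the `j`-th coordinate direction. -/
noncomputable def pderiv' {m : ℕ} (f : (Fin m → ℝ) → ℝ) (j : Fin m) (x : Fin m → ℝ) : ℝ :=
  fderiv ℝ f x (Pi.single j 1)

/-- The quadratic form of the Hessian of `f` at `x` in the direction `ξ`. -/
noncomputable def hessQF {m : ℕ} (f : (Fin m → ℝ) → ℝ) (x ξ : Fin m → ℝ) : ℝ :=
  fderiv ℝ (fun w => fderiv ℝ f w ξ) x ξ

/-- The regularized orthotropic energy density
`f_δ(z) = (1/p) Σ_{i=1}^n (δ + z_i² + z_{i+n}² + z_{2n+1}²)^{p/2}` on ℝ^{2n+1}. -/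
noncomputable def fdelta (n : ℕ) (p δ : ℝ) (z : Fin (2 * n + 1) → ℝ) : ℝ :=
  (1 / p) * ∑ i : Fin n,
    (δ + (z ⟨i.1, by have := i.isLt; omega⟩) ^ 2 + (z ⟨i.1 + n, by have := i.isLt; omega⟩) ^ 2 +
      (z ⟨2 * n, by omega⟩) ^ 2) ^ (p / 2)

/-- The weight `λ_{i,δ}(z) = (δ + z_i² + z_{i+n}² + z_{2n+1}²)^{(p−2)/2}` for `1 ≤ i ≤ n`. -/
noncomputable def lamdelta (n : ℕ) (p δ : ℝ) (i : Fin n) (z : Fin (2 * n + 1) → ℝ) : ℝ :=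
  (δ + (z ⟨i.1, by have := i.isLt; omega⟩) ^ 2 + (z ⟨i.1 + n, by have := i.isLt; omega⟩) ^ 2 +
    (z ⟨2 * n, by omega⟩) ^ 2) ^ ((p - 2) / 2)


noncomputable def prj {N : ℕ} (j : Fin N) : (Fin N → ℝ) →L[ℝ] ℝ :=
  ContinuousLinearMap.proj j

noncomputable def ggf {N k : ℕ} (A B : Fin k → Fin N) (C : Fin N) (δ : ℝ) (i : Fin k)
    (w : Fin N → ℝ) : ℝ := δ + w (A i) ^ 2 + w (B i) ^ 2 + w C ^ 2

noncomputable def Gd {N k : ℕ} (A B : Fin k → Fin N) (C : Fin N) (i : Fin k)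
    (w : Fin N → ℝ) : (Fin N → ℝ) →L[ℝ] ℝ :=
  (2 * w (A i)) • prj (A i) + (2 * w (B i)) • prj (B i) + (2 * w C) • prj C

theorem hg_hasFDerivAt {N k : ℕ} (A B : Fin k → Fin N) (C : Fin N) (δ : ℝ) (i : Fin k)
    (w : Fin N → ℝ) : HasFDerivAt (ggf A B C δ i) (Gd A B C i w) w := by
  have hj : ∀ j : Fin N, HasFDerivAt (fun v : Fin N → ℝ => v j) (prj j) w :=
    fun j => (prj j).hasFDerivAt
  have h2 : ∀ j : Fin N, HasFDerivAt (fun v : Fin N → ℝ => v j ^ 2) ((2 * w j) • prj j) w := by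
    intro j
    have hfun : (fun v : Fin N → ℝ => v j ^ 2) = fun v => v j * v j := by funext v; ring
    rw [hfun]
    have h := (hj j).fun_mul (hj j)
    refine h.congr_fderiv ?_
    apply ContinuousLinearMap.ext; intro v
    simp [prj]
    ring
  exact (((h2 (A i)).const_add δ).add (h2 (B i))).add (h2 C)

theorem key {N : ℕ} (p δ : ℝ) (hp : 2 ≤ p) (hδ : 0 < δ) {k : ℕ} (A B : Fin k → Fin N) (C : Fin N)
    (z ξ : Fin N → ℝ) :
    fderiv ℝ (fun w => fderiv ℝ
        (fun v : Fin N → ℝ => (1/p) * ∑ i : Fin k, (ggf A B C δ i v) ^ (p/2)) w ξ) z ξ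
      = ∑ i : Fin k, ((ggf A B C δ i z) ^ ((p-2)/2)
          * (ξ (A i)^2 + ξ (B i)^2 + ξ C^2)
        + (p-2) * (ggf A B C δ i z) ^ ((p-4)/2)
          * (z (A i)*ξ (A i) + z (B i)*ξ (B i) + z C * ξ C)^2) := by
  have hp0 : p ≠ 0 := by linarith
  have hgpos : ∀ (i : Fin k) (w : Fin N → ℝ), (0:ℝ) < ggf A B C δ i w := by
    intro i w; unfold ggf; positivity
  have hj : ∀ (j : Fin N) (w : Fin N → ℝ), HasFDerivAt (fun v : Fin N → ℝ => v j) (prj j) w :=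
    fun j w => (prj j).hasFDerivAt
  have hF : ∀ w, HasFDerivAt
      (fun v : Fin N → ℝ => (1/p) * ∑ i : Fin k, (ggf A B C δ i v) ^ (p/2))
      ((1/p) • ∑ i : Fin k, ((p/2 * (ggf A B C δ i w) ^ (p/2 - 1)) • Gd A B C i w)) w := by
    intro w
    exact HasFDerivAt.const_mul (HasFDerivAt.fun_sum fun i _ =>
      (hg_hasFDerivAt A B C δ i w).rpow_const (Or.inl (hgpos i w).ne')) (1/p)
  have step1 : ∀ w, fderiv ℝ
      (fun v : Fin N → ℝ => (1/p) * ∑ i : Fin k, (ggf A B C δ i v) ^ (p/2)) w ξ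
      = ∑ i : Fin k, (ggf A B C δ i w) ^ ((p-2)/2)
          * (w (A i) * ξ (A i) + w (B i) * ξ (B i) + w C * ξ C) := by
    intro w
    rw [(hF w).fderiv]
    simp only [ContinuousLinearMap.smul_apply, ContinuousLinearMap.sum_apply,
      ContinuousLinearMap.add_apply, Gd, prj, ContinuousLinearMap.proj_apply,
      smul_eq_mul, Finset.mul_sum]
    refine Finset.sum_congr rfl fun i _ => ?_
    have he : p/2 - 1 = (p-2)/2 := by ring
    rw [he]
    field_simp
  have hS : ∀ i : Fin k, HasFDerivAt
      (fun w : Fin N → ℝ => w (A i) * ξ (A i) + w (B i) * ξ (B i) + w C * ξ C)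
      (ξ (A i) • prj (A i) + ξ (B i) • prj (B i) + ξ C • prj C) z := by
    intro i
    exact (((hj (A i) z).mul_const (ξ (A i))).add ((hj (B i) z).mul_const (ξ (B i)))).add
      ((hj C z).mul_const (ξ C))
  have hH : HasFDerivAt
      (fun w : Fin N → ℝ => ∑ i : Fin k, (ggf A B C δ i w) ^ ((p-2)/2)
          * (w (A i) * ξ (A i) + w (B i) * ξ (B i) + w C * ξ C))
      (∑ i : Fin k, ((ggf A B C δ i z) ^ ((p-2)/2)
           • (ξ (A i) • prj (A i) + ξ (B i) • prj (B i) + ξ C • prj C)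
         + (z (A i) * ξ (A i) + z (B i) * ξ (B i) + z C * ξ C)
           • (((p-2)/2 * (ggf A B C δ i z) ^ ((p-2)/2 - 1)) • Gd A B C i z))) z := by
    refine HasFDerivAt.fun_sum fun i _ => ?_
    exact ((hg_hasFDerivAt A B C δ i z).rpow_const (Or.inl (hgpos i z).ne')).mul (hS i)
  have heq : (fun w => fderiv ℝ
      (fun v : Fin N → ℝ => (1/p) * ∑ i : Fin k, (ggf A B C δ i v) ^ (p/2)) w ξ)
      = fun w : Fin N → ℝ => ∑ i : Fin k, (ggf A B C δ i w) ^ ((p-2)/2)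
          * (w (A i) * ξ (A i) + w (B i) * ξ (B i) + w C * ξ C) := funext step1
  rw [heq, hH.fderiv]
  simp only [ContinuousLinearMap.sum_apply, ContinuousLinearMap.add_apply,
    ContinuousLinearMap.smul_apply, Gd, prj, ContinuousLinearMap.proj_apply, smul_eq_mul]
  refine Finset.sum_congr rfl fun i _ => ?_
  have he : (p-2)/2 - 1 = (p-4)/2 := by ring
  rw [he]
  ring
theorem term_lower (p δ a b c x y t : ℝ) (hp : 2 ≤ p) (hδ : 0 < δ) :
    (δ + a^2 + b^2 + c^2) ^ ((p-2)/2) * (x^2 + y^2 + t^2) ≤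
      (δ + a^2 + b^2 + c^2) ^ ((p-2)/2) * (x^2 + y^2 + t^2)
      + (p-2) * (δ + a^2 + b^2 + c^2) ^ ((p-4)/2) * (a*x + b*y + c*t)^2 := by
  have hg : (0:ℝ) < δ + a^2 + b^2 + c^2 := by positivity
  have h : (0:ℝ) ≤ (p-2) * (δ + a^2 + b^2 + c^2) ^ ((p-4)/2) * (a*x + b*y + c*t)^2 :=
    mul_nonneg (mul_nonneg (by linarith) (Real.rpow_nonneg hg.le _)) (sq_nonneg _)
  linarith

theorem term_upper (p δ a b c x y t : ℝ) (hp : 2 ≤ p) (hδ : 0 < δ) :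
    (δ + a^2 + b^2 + c^2) ^ ((p-2)/2) * (x^2 + y^2 + t^2)
      + (p-2) * (δ + a^2 + b^2 + c^2) ^ ((p-4)/2) * (a*x + b*y + c*t)^2
      ≤ p * ((δ + a^2 + b^2 + c^2) ^ ((p-2)/2) * (x^2 + y^2 + t^2)) := by
  have hg : (0:ℝ) < δ + a^2 + b^2 + c^2 := by positivity
  have hT : (0:ℝ) ≤ x^2 + y^2 + t^2 := by positivity
  have hS : (a*x + b*y + c*t)^2 ≤ (δ + a^2 + b^2 + c^2) * (x^2 + y^2 + t^2) := by
    nlinarith [sq_nonneg (a*y - b*x), sq_nonneg (a*t - c*x), sq_nonneg (b*t - c*y),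
      mul_nonneg hδ.le hT]
  have hpow : (δ + a^2 + b^2 + c^2) ^ ((p-4)/2) * (δ + a^2 + b^2 + c^2)
      = (δ + a^2 + b^2 + c^2) ^ ((p-2)/2) := by
    rw [← Real.rpow_add_one hg.ne']
    congr 1
    ring
  have h2 : (p-2) * (δ + a^2 + b^2 + c^2) ^ ((p-4)/2) * (a*x + b*y + c*t)^2
      ≤ (p-2) * (δ + a^2 + b^2 + c^2) ^ ((p-4)/2)
        * ((δ + a^2 + b^2 + c^2) * (x^2 + y^2 + t^2)) :=
    mul_le_mul_of_nonneg_left hS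
      (mul_nonneg (by linarith) (Real.rpow_nonneg hg.le _))
  have h3 : (p-2) * (δ + a^2 + b^2 + c^2) ^ ((p-4)/2)
        * ((δ + a^2 + b^2 + c^2) * (x^2 + y^2 + t^2))
      = (p-2) * ((δ + a^2 + b^2 + c^2) ^ ((p-2)/2) * (x^2 + y^2 + t^2)) := by
    rw [← hpow]; ring
  have hlam : (0:ℝ) ≤ (δ + a^2 + b^2 + c^2) ^ ((p-2)/2) * (x^2 + y^2 + t^2) :=
    mul_nonneg (Real.rpow_nonneg hg.le _) hT
  nlinarith [h2, h3]

/-- Structure condition for the Hessian of `f_δ` (equation (14) of the paper). -/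
theorem fdelta_structure_condition (n : ℕ) (hn : 1 ≤ n) (p δ : ℝ) (hp : 2 ≤ p) (hδ : 0 < δ) :
    ∃ L : ℝ, 1 < L ∧ ∀ (z ξ : Fin (2 * n + 1) → ℝ),
      (∑ i : Fin n, lamdelta n p δ i z *
          ((ξ ⟨i.1, by have := i.isLt; omega⟩) ^ 2 + (ξ ⟨i.1 + n, by have := i.isLt; omega⟩) ^ 2 +
            (ξ ⟨2 * n, by omega⟩) ^ 2)) ≤ hessQF (fdelta n p δ) z ξ ∧
      hessQF (fdelta n p δ) z ξ ≤
        L * ∑ i : Fin n, lamdelta n p δ i z *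
          ((ξ ⟨i.1, by have := i.isLt; omega⟩) ^ 2 + (ξ ⟨i.1 + n, by have := i.isLt; omega⟩) ^ 2 +
            (ξ ⟨2 * n, by omega⟩) ^ 2) := by
  refine ⟨p, by linarith, fun z ξ => ?_⟩
  have hQ := key p δ hp hδ
    (fun i : Fin n => (⟨i.1, by have := i.isLt; omega⟩ : Fin (2 * n + 1)))
    (fun i : Fin n => (⟨i.1 + n, by have := i.isLt; omega⟩ : Fin (2 * n + 1)))
    (⟨2 * n, by omega⟩ : Fin (2 * n + 1)) z ξ
  have hQ' : hessQF (fdelta n p δ) z ξ = _ := hQ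
  simp only [ggf] at hQ'
  rw [hQ']
  constructor
  · exact Finset.sum_le_sum fun i _ => term_lower p δ _ _ _ _ _ _ hp hδ
  · rw [Finset.mul_sum]
    exact Finset.sum_le_sum fun i _ => term_upper p δ _ _ _ _ _ _ hp hδ
end

section
/- Let p ≥ 2, δ > 0, and f_δ(z) = (1/p) Σ_{i=1}^n (δ + z_i² + z_{i+n}² + z_{2n+1}²)^{p/2} on ℝ^{2n+1}. Then for all z, ζ ∈ ℝ^{2n+1}: ⟨Df_δ(z) − Df_δ(ζ), z − ζ⟩ ≥ Σ_{i=1}^{2n+1} (z_i − ζ_i)² (δ + ((z_i + ζ_i)/2)²)^{(p−2)/2}. -/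
open Real

open Set

noncomputable def gfun (δ α w : ℝ) : ℝ := w * (δ + w ^ 2) ^ α
noncomputable def hfun (δ α w : ℝ) : ℝ :=
  (δ + w ^ 2) ^ α + 2 * α * w ^ 2 * (δ + w ^ 2) ^ (α - 1)

lemma sq_pos {δ : ℝ} (hδ : 0 < δ) (w : ℝ) : 0 < δ + w ^ 2 := by positivity

lemma hasDerivAt_gfun {δ : ℝ} (hδ : 0 < δ) (α w : ℝ) :
    HasDerivAt (gfun δ α) (hfun δ α w) w := by
  have h1 : HasDerivAt (fun w : ℝ => δ + w ^ 2) (2 * w) w := by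
    simpa using ((hasDerivAt_pow 2 w).const_add δ)
  have h2 : HasDerivAt (fun w : ℝ => (δ + w ^ 2) ^ α)
      (2 * w * α * (δ + w ^ 2) ^ (α - 1)) w :=
    h1.rpow_const (Or.inl (sq_pos hδ w).ne')
  have h3 := (hasDerivAt_id w).mul h2
  simp only [id_eq] at h3
  refine h3.congr_deriv ?_
  unfold hfun
  ring

lemma hasDerivAt_hfun {δ : ℝ} (hδ : 0 < δ) (α w : ℝ) :
    HasDerivAt (hfun δ α) (2 * α * w * (δ + w ^ 2) ^ (α - 2) * (3 * δ + (1 + 2 * α) * w ^ 2)) w := by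
  have hpos := sq_pos hδ w
  have h1 : HasDerivAt (fun w : ℝ => δ + w ^ 2) (2 * w) w := by
    simpa using ((hasDerivAt_pow 2 w).const_add δ)
  have h2 : HasDerivAt (fun w : ℝ => (δ + w ^ 2) ^ α)
      (2 * w * α * (δ + w ^ 2) ^ (α - 1)) w :=
    h1.rpow_const (Or.inl hpos.ne')
  have h3 : HasDerivAt (fun w : ℝ => (δ + w ^ 2) ^ (α - 1))
      (2 * w * (α - 1) * (δ + w ^ 2) ^ (α - 1 - 1)) w :=
    h1.rpow_const (Or.inl hpos.ne')
  have h4 : HasDerivAt (fun w : ℝ => w ^ 2) (2 * w) w := by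
    simpa using hasDerivAt_pow 2 w
  have h5 := ((h4.const_mul (2 * α)).mul h3)
  have h6 := h2.add h5
  have e1 : (δ + w ^ 2) ^ (α - 1) = (δ + w ^ 2) ^ (α - 2) * (δ + w ^ 2) := by
    rw [show (α - 1) = (α - 2) + 1 by ring, Real.rpow_add hpos, Real.rpow_one]
  have e2 : (α - 1 - 1) = α - 2 := by ring
  rw [e2] at h6
  refine h6.congr_deriv ?_
  rw [e1]; ring

lemma gfun_convex {δ α : ℝ} (hδ : 0 < δ) (hα : 0 ≤ α) :
    ConvexOn ℝ (Ici (0:ℝ)) (gfun δ α) := by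
  apply convexOn_of_hasDerivWithinAt2_nonneg (convex_Ici 0)
    (f' := hfun δ α)
    (f'' := fun w => 2 * α * w * (δ + w ^ 2) ^ (α - 2) * (3 * δ + (1 + 2 * α) * w ^ 2))
  · exact fun w _ => ((hasDerivAt_gfun hδ α w).continuousAt.continuousWithinAt)
  · exact fun w _ => (hasDerivAt_gfun hδ α w).hasDerivWithinAt
  · exact fun w _ => (hasDerivAt_hfun hδ α w).hasDerivWithinAt
  · intro x hx
    rw [interior_Ici] at hx
    have : (0:ℝ) < x := hx
    have h1 : (0:ℝ) ≤ (δ + x ^ 2) ^ (α - 2) := Real.rpow_nonneg (sq_pos hδ x).le _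
    have h2 : (0:ℝ) ≤ 3 * δ + (1 + 2 * α) * x ^ 2 := by positivity
    positivity

/-- midpoint convexity of gfun on [0,∞) -/
lemma gfun_midpoint {δ α : ℝ} (hδ : 0 < δ) (hα : 0 ≤ α) {s t : ℝ} (hs : 0 ≤ s) (ht : 0 ≤ t) :
    2 * gfun δ α ((s + t) / 2) ≤ gfun δ α s + gfun δ α t := by
  have := (gfun_convex hδ hα).2 (mem_Ici.2 hs) (mem_Ici.2 ht)
    (by norm_num : (0:ℝ) ≤ (1:ℝ)/2) (by norm_num : (0:ℝ) ≤ (1:ℝ)/2) (by norm_num)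
  simp only [smul_eq_mul] at this
  have e : 1/2 * s + 1/2 * t = (s + t) / 2 := by ring
  rw [e] at this
  linarith

/-- Case (a): for `0 ≤ t ≤ s`, `g s - g t ≥ (s - t) * (δ + M²)^α`. -/
lemma gfun_slope {δ α : ℝ} (hδ : 0 < δ) (hα : 0 ≤ α) {s t : ℝ} (ht : 0 ≤ t) (hts : t ≤ s) :
    (s - t) * (δ + ((s + t) / 2) ^ 2) ^ α ≤ gfun δ α s - gfun δ α t := by
  set M := (s + t) / 2 with hM
  have hMs : M ≤ s := by rw [hM]; linarith
  have hM0 : 0 ≤ M := by rw [hM]; linarith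
  have htM : t ≤ M := by rw [hM]; linarith
  have h1 : (δ + M ^ 2) ≤ (δ + s ^ 2) := by nlinarith
  have h2 : (δ + t ^ 2) ≤ (δ + M ^ 2) := by nlinarith
  have r1 : (δ + M ^ 2) ^ α ≤ (δ + s ^ 2) ^ α :=
    Real.rpow_le_rpow (by positivity) h1 hα
  have r2 : (δ + t ^ 2) ^ α ≤ (δ + M ^ 2) ^ α :=
    Real.rpow_le_rpow (by positivity) h2 hα
  have hs0 : 0 ≤ s := le_trans ht hts
  unfold gfun
  nlinarith [mul_nonneg hs0 (sub_nonneg.2 r1), mul_nonneg ht (sub_nonneg.2 r2)]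

set_option maxHeartbeats 1000000 in
/-- 3D vector monotonicity lemma. -/
lemma vec3 {δ α : ℝ} (hδ : 0 < δ) (hα : 0 ≤ α) (x1 x2 x3 y1 y2 y3 : ℝ) :
    (x1 - y1) ^ 2 * (δ + ((x1 + y1) / 2) ^ 2) ^ α
      + (x2 - y2) ^ 2 * (δ + ((x2 + y2) / 2) ^ 2) ^ α
      + (x3 - y3) ^ 2 * (δ + ((x3 + y3) / 2) ^ 2) ^ α ≤
    ((δ + x1 ^ 2 + x2 ^ 2 + x3 ^ 2) ^ α * x1 - (δ + y1 ^ 2 + y2 ^ 2 + y3 ^ 2) ^ α * y1) * (x1 - y1)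
      + ((δ + x1 ^ 2 + x2 ^ 2 + x3 ^ 2) ^ α * x2 - (δ + y1 ^ 2 + y2 ^ 2 + y3 ^ 2) ^ α * y2) * (x2 - y2)
      + ((δ + x1 ^ 2 + x2 ^ 2 + x3 ^ 2) ^ α * x3 - (δ + y1 ^ 2 + y2 ^ 2 + y3 ^ 2) ^ α * y3) * (x3 - y3) := by
  set X := x1 ^ 2 + x2 ^ 2 + x3 ^ 2 with hX
  set Y := y1 ^ 2 + y2 ^ 2 + y3 ^ 2 with hY
  have hX0 : 0 ≤ X := by positivity
  have hY0 : 0 ≤ Y := by positivity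
  set s := Real.sqrt X with hs
  set t := Real.sqrt Y with htt
  have hs0 : 0 ≤ s := Real.sqrt_nonneg _
  have ht0 : 0 ≤ t := Real.sqrt_nonneg _
  have hsX : s ^ 2 = X := Real.sq_sqrt hX0
  have htY : t ^ 2 = Y := Real.sq_sqrt hY0
  set M := (s + t) / 2 with hM
  have hM0 : 0 ≤ M := by rw [hM]; linarith
  set K := (δ + M ^ 2) ^ α with hK
  have hK0 : 0 ≤ K := Real.rpow_nonneg (by positivity) _
  set A := (δ + X) ^ α with hA
  set B := (δ + Y) ^ α with hB
  have hA0 : 0 ≤ A := Real.rpow_nonneg (by positivity) _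
  have hB0 : 0 ≤ B := Real.rpow_nonneg (by positivity) _
  -- abs bound for coordinates
  have habs : ∀ u v : ℝ, u ^ 2 ≤ X → v ^ 2 ≤ Y →
      (δ + ((u + v) / 2) ^ 2) ^ α ≤ K := by
    intro u v hu hv
    have h1 : -s ≤ u ∧ u ≤ s := abs_le_of_sq_le_sq' (by rw [hsX]; exact hu) hs0
    have h2 : -t ≤ v ∧ v ≤ t := abs_le_of_sq_le_sq' (by rw [htY]; exact hv) ht0
    have h3 : ((u + v) / 2) ^ 2 ≤ M ^ 2 := by
      rw [hM]
      have := sq_le_sq' (by linarith [h1.1, h2.1] : -((s + t) / 2) ≤ (u + v) / 2)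
        (by linarith [h1.2, h2.2])
      linarith
    exact Real.rpow_le_rpow (by positivity) (by linarith) hα
  set P := x1 * y1 + x2 * y2 + x3 * y3 with hP
  have hst0 : 0 ≤ s * t := mul_nonneg hs0 ht0
  have hcs : P ^ 2 ≤ X * Y := by
    rw [hP, hX, hY]
    nlinarith [sq_nonneg (x1 * y2 - x2 * y1), sq_nonneg (x1 * y3 - x3 * y1),
      sq_nonneg (x2 * y3 - x3 * y2)]
  have hPle : P ≤ s * t := by nlinarith [hsX, htY]
  have hPge : -(s * t) ≤ P := by nlinarith [hsX, htY]
  -- endpoint inequalities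
  have hgs : gfun δ α s = A * s := by rw [gfun, hsX, hA]; ring
  have hgt : gfun δ α t = B * t := by rw [gfun, htY, hB]; ring
  have e2 : (s + t) * K ≤ A * s + B * t := by
    have h := gfun_midpoint hδ hα hs0 ht0
    rw [hgs, hgt] at h
    have hgM : gfun δ α M = M * K := by rw [gfun, hK]
    rw [← hM] at h
    rw [hgM] at h
    have : (s + t) * K = 2 * (M * K) := by rw [hM]; ring
    linarith
  have e1 : (s - t) ^ 2 * K ≤ (s - t) * (A * s - B * t) := by
    rcases le_total t s with hts | hst
    · have h := gfun_slope hδ hα ht0 hts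
      rw [hgs, hgt, ← hM] at h
      rw [← hK] at h
      nlinarith [h, sub_nonneg.2 hts]
    · have h := gfun_slope hδ hα hs0 hst
      rw [hgs, hgt] at h
      rw [show (t + s) / 2 = M by rw [hM]; ring, ← hK] at h
      nlinarith [h, sub_nonneg.2 hst]
  -- the linear-in-P estimate
  have key : (s ^ 2 + t ^ 2 - 2 * P) * K ≤ A * s ^ 2 + B * t ^ 2 - (A + B) * P := by
    rcases le_total (A + B) (2 * K) with hAB | hAB
    · nlinarith [mul_nonneg (sub_nonneg.2 hAB) (by linarith : (0:ℝ) ≤ P + s * t),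
        mul_le_mul_of_nonneg_left e2 (by linarith : (0:ℝ) ≤ s + t)]
    · nlinarith [mul_nonneg (sub_nonneg.2 hAB) (by linarith : (0:ℝ) ≤ s * t - P), e1]
  -- assemble
  have step1 : (x1 - y1) ^ 2 * (δ + ((x1 + y1) / 2) ^ 2) ^ α
      + (x2 - y2) ^ 2 * (δ + ((x2 + y2) / 2) ^ 2) ^ α
      + (x3 - y3) ^ 2 * (δ + ((x3 + y3) / 2) ^ 2) ^ α
      ≤ ((x1 - y1) ^ 2 + (x2 - y2) ^ 2 + (x3 - y3) ^ 2) * K := by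
    have b1 := habs x1 y1 (by rw [hX]; linarith [sq_nonneg x2, sq_nonneg x3])
      (by rw [hY]; linarith [sq_nonneg y2, sq_nonneg y3])
    have b2 := habs x2 y2 (by rw [hX]; linarith [sq_nonneg x1, sq_nonneg x3])
      (by rw [hY]; linarith [sq_nonneg y1, sq_nonneg y3])
    have b3 := habs x3 y3 (by rw [hX]; linarith [sq_nonneg x1, sq_nonneg x2])
      (by rw [hY]; linarith [sq_nonneg y1, sq_nonneg y2])
    calc (x1 - y1) ^ 2 * (δ + ((x1 + y1) / 2) ^ 2) ^ α
        + (x2 - y2) ^ 2 * (δ + ((x2 + y2) / 2) ^ 2) ^ α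
        + (x3 - y3) ^ 2 * (δ + ((x3 + y3) / 2) ^ 2) ^ α
        ≤ (x1 - y1) ^ 2 * K + (x2 - y2) ^ 2 * K + (x3 - y3) ^ 2 * K :=
          add_le_add (add_le_add (mul_le_mul_of_nonneg_left b1 (sq_nonneg _))
            (mul_le_mul_of_nonneg_left b2 (sq_nonneg _)))
            (mul_le_mul_of_nonneg_left b3 (sq_nonneg _))
      _ = ((x1 - y1) ^ 2 + (x2 - y2) ^ 2 + (x3 - y3) ^ 2) * K := by ring
  have step2 : ((x1 - y1) ^ 2 + (x2 - y2) ^ 2 + (x3 - y3) ^ 2) * K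
      ≤ (A * x1 - B * y1) * (x1 - y1) + (A * x2 - B * y2) * (x2 - y2)
        + (A * x3 - B * y3) * (x3 - y3) := by
    have l1 : ((x1 - y1) ^ 2 + (x2 - y2) ^ 2 + (x3 - y3) ^ 2) = s ^ 2 + t ^ 2 - 2 * P := by
      rw [hsX, htY, hX, hY, hP]; ring
    have l2 : (A * x1 - B * y1) * (x1 - y1) + (A * x2 - B * y2) * (x2 - y2)
        + (A * x3 - B * y3) * (x3 - y3) = A * s ^ 2 + B * t ^ 2 - (A + B) * P := by
      rw [hsX, htY, hX, hY, hP]; ring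
    rw [l1, l2]
    exact key
  have step3 : (A * x1 - B * y1) * (x1 - y1) + (A * x2 - B * y2) * (x2 - y2)
      + (A * x3 - B * y3) * (x3 - y3)
      = ((δ + x1 ^ 2 + x2 ^ 2 + x3 ^ 2) ^ α * x1 - (δ + y1 ^ 2 + y2 ^ 2 + y3 ^ 2) ^ α * y1) * (x1 - y1)
      + ((δ + x1 ^ 2 + x2 ^ 2 + x3 ^ 2) ^ α * x2 - (δ + y1 ^ 2 + y2 ^ 2 + y3 ^ 2) ^ α * y2) * (x2 - y2)
      + ((δ + x1 ^ 2 + x2 ^ 2 + x3 ^ 2) ^ α * x3 - (δ + y1 ^ 2 + y2 ^ 2 + y3 ^ 2) ^ α * y3) * (x3 - y3) := by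
    rw [hA, hB, hX, hY,
      show δ + (x1 ^ 2 + x2 ^ 2 + x3 ^ 2) = δ + x1 ^ 2 + x2 ^ 2 + x3 ^ 2 from by ring,
      show δ + (y1 ^ 2 + y2 ^ 2 + y3 ^ 2) = δ + y1 ^ 2 + y2 ^ 2 + y3 ^ 2 from by ring]
  rw [← step3]
  exact step1.trans step2

def ia (n : ℕ) (i : Fin n) : Fin (2 * n + 1) := ⟨i.1, by have := i.isLt; omega⟩
def ib (n : ℕ) (i : Fin n) : Fin (2 * n + 1) := ⟨i.1 + n, by have := i.isLt; omega⟩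
def ic (n : ℕ) : Fin (2 * n + 1) := ⟨2 * n, by omega⟩

lemma fdelta_eq (n : ℕ) (p δ : ℝ) : fdelta n p δ = fun z =>
    (1 / p) * ∑ i : Fin n,
      (δ + (z (ia n i)) ^ 2 + (z (ib n i)) ^ 2 + (z (ic n)) ^ 2) ^ (p / 2) := rfl

lemma hasFDerivAt_fdelta (n : ℕ) (p δ : ℝ) (hp : 2 ≤ p) (hδ : 0 < δ) (z : Fin (2 * n + 1) → ℝ) :
    HasFDerivAt (fdelta n p δ)
      ((1 / p) • ∑ i : Fin n,
        (p / 2 * (δ + (z (ia n i)) ^ 2 + (z (ib n i)) ^ 2 + (z (ic n)) ^ 2) ^ (p / 2 - 1)) •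
          ((z (ia n i) • ContinuousLinearMap.proj (ia n i)
            + z (ia n i) • ContinuousLinearMap.proj (ia n i))
          + (z (ib n i) • ContinuousLinearMap.proj (ib n i)
            + z (ib n i) • ContinuousLinearMap.proj (ib n i))
          + (z (ic n) • ContinuousLinearMap.proj (ic n)
            + z (ic n) • (ContinuousLinearMap.proj (ic n)
              : (Fin (2 * n + 1) → ℝ) →L[ℝ] ℝ)))) z := by
  rw [fdelta_eq]
  have key : ∀ i : Fin n, HasFDerivAt (fun z : Fin (2 * n + 1) → ℝ =>
      (δ + (z (ia n i)) ^ 2 + (z (ib n i)) ^ 2 + (z (ic n)) ^ 2) ^ (p / 2))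
      ((p / 2 * (δ + (z (ia n i)) ^ 2 + (z (ib n i)) ^ 2 + (z (ic n)) ^ 2) ^ (p / 2 - 1)) •
          ((z (ia n i) • ContinuousLinearMap.proj (ia n i)
            + z (ia n i) • ContinuousLinearMap.proj (ia n i))
          + (z (ib n i) • ContinuousLinearMap.proj (ib n i)
            + z (ib n i) • ContinuousLinearMap.proj (ib n i))
          + (z (ic n) • ContinuousLinearMap.proj (ic n)
            + z (ic n) • (ContinuousLinearMap.proj (ic n)
              : (Fin (2 * n + 1) → ℝ) →L[ℝ] ℝ)))) z := by
    intro i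
    have hsq : ∀ k : Fin (2 * n + 1), HasFDerivAt (fun w : Fin (2 * n + 1) → ℝ => (w k) ^ 2)
        ((z k • ContinuousLinearMap.proj k + z k • ContinuousLinearMap.proj k
          : (Fin (2 * n + 1) → ℝ) →L[ℝ] ℝ)) z := by
      intro k
      have := (hasFDerivAt_apply (𝕜 := ℝ) k z).mul (hasFDerivAt_apply (𝕜 := ℝ) k z)
      simp only [pow_two]; exact this
    have hQ : HasFDerivAt (fun w : Fin (2 * n + 1) → ℝ =>
        δ + (w (ia n i)) ^ 2 + (w (ib n i)) ^ 2 + (w (ic n)) ^ 2)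
        (((z (ia n i) • ContinuousLinearMap.proj (ia n i)
              + z (ia n i) • ContinuousLinearMap.proj (ia n i))
            + (z (ib n i) • ContinuousLinearMap.proj (ib n i)
              + z (ib n i) • ContinuousLinearMap.proj (ib n i))
            + (z (ic n) • ContinuousLinearMap.proj (ic n)
              + z (ic n) • (ContinuousLinearMap.proj (ic n)
                : (Fin (2 * n + 1) → ℝ) →L[ℝ] ℝ)))) z := by
      exact (((hsq (ia n i)).const_add δ).add (hsq (ib n i))).add (hsq (ic n))
    have hpos : (0:ℝ) < δ + (z (ia n i)) ^ 2 + (z (ib n i)) ^ 2 + (z (ic n)) ^ 2 := by positivity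
    exact hQ.rpow_const (Or.inl hpos.ne')
  exact (HasFDerivAt.fun_sum (fun i _ => key i)).const_mul (1 / p)

lemma pderiv_fdelta (n : ℕ) (p δ : ℝ) (hp : 2 ≤ p) (hδ : 0 < δ) (z : Fin (2 * n + 1) → ℝ)
    (j : Fin (2 * n + 1)) :
    pderiv' (fdelta n p δ) j z = ∑ i : Fin n,
      (δ + (z (ia n i)) ^ 2 + (z (ib n i)) ^ 2 + (z (ic n)) ^ 2) ^ ((p - 2) / 2) *
        (z (ia n i) * (if ia n i = j then (1:ℝ) else 0)
          + z (ib n i) * (if ib n i = j then (1:ℝ) else 0)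
          + z (ic n) * (if ic n = j then (1:ℝ) else 0)) := by
  have hp0 : p ≠ 0 := by linarith
  rw [pderiv', (hasFDerivAt_fdelta n p δ hp hδ z).fderiv]
  simp only [ContinuousLinearMap.smul_apply, ContinuousLinearMap.sum_apply,
    ContinuousLinearMap.add_apply, ContinuousLinearMap.proj_apply, smul_eq_mul,
    Pi.single_apply]
  rw [Finset.mul_sum]
  apply Finset.sum_congr rfl
  intro i _
  rw [show p / 2 - 1 = (p - 2) / 2 by ring]
  field_simp
  ring

/-- Monotonicity estimate:
`⟨Df_δ(z) − Df_δ(ζ), z − ζ⟩ ≥ Σ_i (z_i − ζ_i)² (δ + ((z_i+ζ_i)/2)²)^{(p−2)/2}`. -/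
theorem fdelta_monotonicity (n : ℕ) (hn : 1 ≤ n) (p δ : ℝ) (hp : 2 ≤ p) (hδ : 0 < δ)
    (z ζ : Fin (2 * n + 1) → ℝ) :
    (∑ i : Fin (2 * n + 1), (z i - ζ i) ^ 2 * (δ + ((z i + ζ i) / 2) ^ 2) ^ ((p - 2) / 2)) ≤
      ∑ i : Fin (2 * n + 1),
        (pderiv' (fdelta n p δ) i z - pderiv' (fdelta n p δ) i ζ) * (z i - ζ i) := by
  have hα : 0 ≤ (p - 2) / 2 := by linarith
  set α := (p - 2) / 2 with hαdef
  -- the pointwise RHS quantity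
  set R : Fin (2 * n + 1) → ℝ :=
    fun j => (z j - ζ j) ^ 2 * (δ + ((z j + ζ j) / 2) ^ 2) ^ α with hR
  have hR0 : ∀ j, 0 ≤ R j := fun j => by
    rw [hR]; positivity
  -- rewrite the RHS as a sum over triples
  set lamz : Fin n → ℝ :=
    fun i => (δ + (z (ia n i)) ^ 2 + (z (ib n i)) ^ 2 + (z (ic n)) ^ 2) ^ α with hlamz
  set lamζ : Fin n → ℝ :=
    fun i => (δ + (ζ (ia n i)) ^ 2 + (ζ (ib n i)) ^ 2 + (ζ (ic n)) ^ 2) ^ α with hlamζ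
  set T : Fin n → ℝ := fun i =>
    (lamz i * z (ia n i) - lamζ i * ζ (ia n i)) * (z (ia n i) - ζ (ia n i))
    + (lamz i * z (ib n i) - lamζ i * ζ (ib n i)) * (z (ib n i) - ζ (ib n i))
    + (lamz i * z (ic n) - lamζ i * ζ (ic n)) * (z (ic n) - ζ (ic n)) with hT
  have hRHS : ∑ j : Fin (2 * n + 1),
      (pderiv' (fdelta n p δ) j z - pderiv' (fdelta n p δ) j ζ) * (z j - ζ j)
      = ∑ i : Fin n, T i := by
    have e1 : ∀ j : Fin (2 * n + 1),
        (pderiv' (fdelta n p δ) j z - pderiv' (fdelta n p δ) j ζ) * (z j - ζ j)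
        = ∑ i : Fin n,
          ((if ia n i = j then 1 else 0) *
              ((lamz i * z (ia n i) - lamζ i * ζ (ia n i)) * (z j - ζ j))
          + (if ib n i = j then 1 else 0) *
              ((lamz i * z (ib n i) - lamζ i * ζ (ib n i)) * (z j - ζ j))
          + (if ic n = j then 1 else 0) *
              ((lamz i * z (ic n) - lamζ i * ζ (ic n)) * (z j - ζ j))) := by
      intro j
      rw [pderiv_fdelta n p δ hp hδ z j, pderiv_fdelta n p δ hp hδ ζ j,
        ← Finset.sum_sub_distrib, Finset.sum_mul]
      apply Finset.sum_congr rfl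
      intro i _
      rw [hlamz, hlamζ]
      ring
    rw [Finset.sum_congr rfl (fun j _ => e1 j), Finset.sum_comm]
    apply Finset.sum_congr rfl
    intro i _
    rw [Finset.sum_add_distrib, Finset.sum_add_distrib]
    simp only [ite_mul, one_mul, zero_mul, Finset.sum_ite_eq, Finset.mem_univ, if_true]
    rfl
  rw [hRHS]
  -- per-triple lower bound from vec3
  have hTi : ∀ i : Fin n, R (ia n i) + R (ib n i) + R (ic n) ≤ T i := by
    intro i
    have := vec3 hδ hα (z (ia n i)) (z (ib n i)) (z (ic n))
      (ζ (ia n i)) (ζ (ib n i)) (ζ (ic n))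
    simp only [hT, hlamz, hlamζ, hR]
    exact this
  -- counting: the full sum is at most the sum over triples
  have hcount : ∑ j : Fin (2 * n + 1), R j
      ≤ ∑ i : Fin n, (R (ia n i) + R (ib n i) + R (ic n)) := by
    classical
    set RN : ℕ → ℝ := fun k => if h : k < 2 * n + 1 then R ⟨k, h⟩ else 0 with hRN
    have hRNj : ∀ j : Fin (2 * n + 1), R j = RN j.1 := by
      intro j; rw [hRN]; simp [j.isLt]
    have l1 : ∑ j : Fin (2 * n + 1), R j = ∑ k ∈ Finset.range (2 * n + 1), RN k := by
      rw [Finset.sum_congr rfl (fun j _ => hRNj j)]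
      exact Fin.sum_univ_eq_sum_range RN (2 * n + 1)
    have l2 : ∑ k ∈ Finset.range (2 * n + 1), RN k
        = ∑ k ∈ Finset.range (2 * n), RN k + RN (2 * n) := Finset.sum_range_succ RN (2 * n)
    have l3 : ∑ k ∈ Finset.range (2 * n), RN k
        = ∑ k ∈ Finset.range n, RN k + ∑ k ∈ Finset.range n, RN (n + k) := by
      rw [show 2 * n = n + n by ring]
      exact Finset.sum_range_add RN n n
    have l4 : ∑ i : Fin n, R (ia n i) = ∑ k ∈ Finset.range n, RN k := by
      rw [Finset.sum_congr rfl (fun i _ => hRNj (ia n i))]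
      exact Fin.sum_univ_eq_sum_range (fun k => RN k) n
    have l5 : ∑ i : Fin n, R (ib n i) = ∑ k ∈ Finset.range n, RN (n + k) := by
      rw [Finset.sum_congr rfl (fun i _ => hRNj (ib n i))]
      have := Fin.sum_univ_eq_sum_range (fun k => RN (k + n)) n
      rw [show (fun i : Fin n => RN ((ib n i).1)) = fun i : Fin n => RN (i.1 + n) from rfl]
      rw [this]
      apply Finset.sum_congr rfl
      intro k _
      rw [add_comm]
    have l6 : ∑ i : Fin n, (R (ia n i) + R (ib n i) + R (ic n))
        = ∑ k ∈ Finset.range n, RN k + ∑ k ∈ Finset.range n, RN (n + k) + n * R (ic n) := by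
      rw [Finset.sum_add_distrib, Finset.sum_add_distrib, l4, l5, Finset.sum_const]
      simp [nsmul_eq_mul]
    have l7 : RN (2 * n) = R (ic n) := (hRNj (ic n)).symm
    have hn' : (1:ℝ) ≤ n := by exact_mod_cast hn
    rw [l1, l2, l3, l6, l7]
    nlinarith [hR0 (ic n), hn']
  calc ∑ j : Fin (2 * n + 1), R j
      ≤ ∑ i : Fin n, (R (ia n i) + R (ib n i) + R (ic n)) := hcount
    _ ≤ ∑ i : Fin n, T i := Finset.sum_le_sum (fun i _ => hTi i)
end
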